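/- In the unit ball Bⁿ = B(0,1), with x = e₁/3, z = 0, y = −e₁/3, one has p_{Bⁿ}(x,y) = (√5/2)·(p_{Bⁿ}(x,z) + p_{Bⁿ}(z,y)); hence the point pair function in Bⁿ cannot satisfy the quasi-metric inequality with any constant c < √5/2. -/

import Mathlib

/-!
For `‖x‖ = t < 1` one computes `p(x, −x) = t / √(t² + (1 − t)²)` and `p(0, x) = t / √(t² + 4(1 − t))`.
At `t = 1/3` these are `1/√5` and `1/5`, so the triple `x, 0, −x` realises the ratio
`p(x, −x) / (p(x, 0) + p(0, −x)) = √5/2`, which therefore bounds every quasi-metric constant from below.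
-/

open Metric Set

/-- The point pair function of the unit ball `Bⁿ`, where `d_{Bⁿ}(x) = 1 − |x|`. -/
noncomputable def pB {n : ℕ} (x y : EuclideanSpace ℝ (Fin n)) : ℝ :=
  dist x y / Real.sqrt (dist x y ^ 2 + 4 * (1 - ‖x‖) * (1 - ‖y‖))

namespace PointPairBall

variable {n : ℕ}

lemma pB_comm (x y : EuclideanSpace ℝ (Fin n)) : pB x y = pB y x := by
  rw [pB, pB, dist_comm, mul_assoc, mul_comm (1 - ‖x‖), ← mul_assoc]

lemma pB_zero_left (y : EuclideanSpace ℝ (Fin n)) :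
    pB 0 y = ‖y‖ / √(‖y‖ ^ 2 + 4 * (1 - ‖y‖)) := by
  rw [pB, dist_zero_left, norm_zero, sub_zero, mul_one]

lemma pB_neg_right (x : EuclideanSpace ℝ (Fin n)) :
    pB x (-x) = ‖x‖ / √(‖x‖ ^ 2 + (1 - ‖x‖) ^ 2) := by
  have hdist : dist x (-x) = 2 * ‖x‖ := by
    rw [dist_eq_norm, sub_neg_eq_add, ← two_smul ℝ x, norm_smul, Real.norm_two]
  have hrad : (2 * ‖x‖) ^ 2 + 4 * (1 - ‖x‖) * (1 - ‖x‖) = 2 ^ 2 * (‖x‖ ^ 2 + (1 - ‖x‖) ^ 2) := by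
    ring
  rw [pB, hdist, norm_neg, hrad, Real.sqrt_mul (by norm_num), Real.sqrt_sq (by norm_num),
    mul_div_mul_left _ _ two_ne_zero]

lemma pB_zero_left_of_norm_eq_third {y : EuclideanSpace ℝ (Fin n)} (hy : ‖y‖ = 1 / 3) :
    pB 0 y = 1 / 5 := by
  rw [pB_zero_left, hy, show (1 / 3 : ℝ) ^ 2 + 4 * (1 - 1 / 3) = (5 / 3) ^ 2 by norm_num,
    Real.sqrt_sq (by norm_num)]
  norm_num

lemma pB_neg_right_of_norm_eq_third {x : EuclideanSpace ℝ (Fin n)} (hx : ‖x‖ = 1 / 3) :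
    pB x (-x) = 1 / √5 := by
  rw [pB_neg_right, hx, show (1 / 3 : ℝ) ^ 2 + (1 - 1 / 3) ^ 2 = (1 / 3) ^ 2 * 5 by norm_num,
    Real.sqrt_mul (by positivity), Real.sqrt_sq (by norm_num)]
  field_simp

end PointPairBall

open PointPairBall in
/-- With `x = e₁/3`, `z = 0`, `y = −e₁/3` in `Bⁿ`, one has
`p(x,y) = (√5/2)(p(x,z) + p(z,y))`; hence the point pair function on `Bⁿ` cannot be a
quasi-metric with any constant `c < √5/2`. -/
theorem pB_sharp_constant (n : ℕ) (hn : 0 < n)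
    (x y z : EuclideanSpace ℝ (Fin n))
    (hx : x = EuclideanSpace.single (⟨0, hn⟩ : Fin n) ((1 : ℝ)/3))
    (hz : z = 0) (hy : y = -x) :
    pB x y = (Real.sqrt 5 / 2) * (pB x z + pB z y) ∧
    ∀ c : ℝ, (∀ a b d : EuclideanSpace ℝ (Fin n), a ∈ Metric.ball (0 : EuclideanSpace ℝ (Fin n)) 1 →
        b ∈ Metric.ball (0 : EuclideanSpace ℝ (Fin n)) 1 →
        d ∈ Metric.ball (0 : EuclideanSpace ℝ (Fin n)) 1 →
        pB a b ≤ c * (pB a d + pB d b)) → Real.sqrt 5 / 2 ≤ c := by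
  subst hz hy
  have hxn : ‖x‖ = 1 / 3 := by rw [hx, PiLp.norm_single, Real.norm_eq_abs]; norm_num
  have hxny : ‖-x‖ = 1 / 3 := by rw [norm_neg, hxn]
  have hsum : pB x 0 + pB 0 (-x) = 2 / 5 := by
    rw [pB_comm x 0, pB_zero_left_of_norm_eq_third hxn, pB_zero_left_of_norm_eq_third hxny]
    norm_num
  have hratio : pB x (-x) = √5 / 2 * (pB x 0 + pB 0 (-x)) := by
    rw [hsum, pB_neg_right_of_norm_eq_third hxn]
    field_simp
    norm_num
  have mem_ball_of_norm {a : EuclideanSpace ℝ (Fin n)} (ha : ‖a‖ = 1 / 3) : a ∈ ball 0 1 := by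
    rw [mem_ball, dist_zero_right, ha]; norm_num
  refine ⟨hratio, fun c hc => ?_⟩
  have hle := hc x (-x) 0 (mem_ball_of_norm hxn) (mem_ball_of_norm hxny) (mem_ball_self one_pos)
  rw [hratio] at hle
  exact le_of_mul_le_mul_right hle (by rw [hsum]; norm_num)
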